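/- Assume the support of μ has nonempty intersection with [0, 2/3). Then for every ε > 0 and every x ∈ int(G₁) there exists N ∈ ℕ such that P(d(φ_N(x,·), C) < ε) > 0, where d is the Euclidean distance on ℝ³. (Lemma 2.3, first part.) -/

import Mathlib

open MeasureTheory ProbabilityTheory Filter Topology
open scoped ENNReal

noncomputable section

/-- The cubic stochastic operator `V_θ`, regarded as a map on (Euclidean) `ℝ³`. -/
def Vcso (θ : ℝ) (x : EuclideanSpace ℝ (Fin 3)) : EuclideanSpace ℝ (Fin 3) :=
  WithLp.toLp 2 ![x 0 * ((x 0)^2 + 3*θ*(x 0)*(x 1 + x 2) + 3*(1-θ)*((x 1)^2 + (x 2)^2) + 2*(x 1)*(x 2)),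
    x 1 * ((x 1)^2 + 3*θ*(x 1)*(x 2 + x 0) + 3*(1-θ)*((x 2)^2 + (x 0)^2) + 2*(x 2)*(x 0)),
    x 2 * ((x 2)^2 + 3*θ*(x 2)*(x 0 + x 1) + 3*(1-θ)*((x 0)^2 + (x 1)^2) + 2*(x 0)*(x 1))]

/-- The simplex `Δ² = {x ∈ ℝ³ : x₁,x₂,x₃ ≥ 0, x₁+x₂+x₃ = 1}`. -/
def simplex2 : Set (EuclideanSpace ℝ (Fin 3)) :=
  {x | 0 ≤ x 0 ∧ 0 ≤ x 1 ∧ 0 ≤ x 2 ∧ x 0 + x 1 + x 2 = 1}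

/-- The random orbit `φ_n(x) = V_{θ_n} ∘ ⋯ ∘ V_{θ_1}(x)` driven by the sequence
`θ_1, θ_2, … = θs 0, θs 1, …`. -/
def phiRDS (θs : ℕ → ℝ) : ℕ → EuclideanSpace ℝ (Fin 3) → EuclideanSpace ℝ (Fin 3)
  | 0, x => x
  | n+1, x => Vcso (θs n) (phiRDS θs n x)

/-- The vertex `e₁ = (1,0,0)`. -/
def e1 : EuclideanSpace ℝ (Fin 3) := WithLp.toLp 2 ![1, 0, 0]

/-- The vertex `c = (1/2,1/2,0)`. -/
def cpt : EuclideanSpace ℝ (Fin 3) := WithLp.toLp 2 ![1/2, 1/2, 0]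

/-- The vertex `C = (1/3,1/3,1/3)`. -/
def Cpt : EuclideanSpace ℝ (Fin 3) := WithLp.toLp 2 ![1/3, 1/3, 1/3]

/-- `G₁ = {y ∈ Δ² : y₁ ≥ y₂ ≥ y₃}`. -/
def G1 : Set (EuclideanSpace ℝ (Fin 3)) :=
  {y ∈ simplex2 | y 0 ≥ y 1 ∧ y 1 ≥ y 2}

/-- The interior of `G₁`: `{y ∈ Δ² : y₁ > y₂ > y₃ > 0}`. -/
def intG1 : Set (EuclideanSpace ℝ (Fin 3)) :=
  {y ∈ simplex2 | y 0 > y 1 ∧ y 1 > y 2 ∧ y 2 > 0}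

/-- The edge `M₁₂ = {y ∈ Δ² : y₁ = y₂ ≥ y₃}`. -/
def M12 : Set (EuclideanSpace ℝ (Fin 3)) :=
  {y ∈ simplex2 | y 0 = y 1 ∧ y 1 ≥ y 2}

/-- The edge `M₂₃ = {y ∈ Δ² : y₁ ≥ y₂ = y₃}`. -/
def M23 : Set (EuclideanSpace ℝ (Fin 3)) :=
  {y ∈ simplex2 | y 0 ≥ y 1 ∧ y 1 = y 2}

/-- The edge `Γ₁₂ = {y ∈ Δ² : y₁ ≥ y₂, y₃ = 0}`. -/
def Gamma12 : Set (EuclideanSpace ℝ (Fin 3)) :=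
  {y ∈ simplex2 | y 0 ≥ y 1 ∧ y 2 = 0}

/-- The seven fixed points `𝒜`. -/
def fixedA : Set (EuclideanSpace ℝ (Fin 3)) :=
  {WithLp.toLp 2 (![1,0,0] : Fin 3 → ℝ), WithLp.toLp 2 (![0,1,0] : Fin 3 → ℝ), WithLp.toLp 2 (![0,0,1] : Fin 3 → ℝ),
    WithLp.toLp 2 (![1/2,1/2,0] : Fin 3 → ℝ), WithLp.toLp 2 (![1/2,0,1/2] : Fin 3 → ℝ),
    WithLp.toLp 2 (![0,1/2,1/2] : Fin 3 → ℝ), WithLp.toLp 2 (![1/3,1/3,1/3] : Fin 3 → ℝ)}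

/-- Positive part of `log t`, valued in `ℝ≥0∞`. -/
def logPos (t : ℝ) : ℝ≥0∞ := ENNReal.ofReal (Real.log t)

/-- Negative part of the extended logarithm (with `log 0 = -∞`), valued in `ℝ≥0∞`. -/
def logNeg (t : ℝ) : ℝ≥0∞ := if t ≤ 0 then ⊤ else ENNReal.ofReal (-Real.log t)

/-- `E log g(Θ) < 0` in the extended sense (the value `-∞` is allowed), where `Θ` has law `μ`:
the positive part of the extended expectation is strictly smaller than the negative part. -/
def expLogNeg (μ : Measure ℝ) (g : ℝ → ℝ) : Prop :=
  ∫⁻ θ, logPos (g θ) ∂μ < ∫⁻ θ, logNeg (g θ) ∂μ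

/-- `E log g(Θ) ≤ r` in the extended sense (the value `-∞` is allowed), where `Θ` has law `μ`. -/
def expLogLe (μ : Measure ℝ) (g : ℝ → ℝ) (r : ℝ) : Prop :=
  ∫⁻ θ, logPos (g θ) ∂μ + ENNReal.ofReal (-r) ≤ ∫⁻ θ, logNeg (g θ) ∂μ + ENNReal.ofReal r

/-- The topological support of a measure on `ℝ`: points all of whose open neighborhoods
have positive measure. -/
def measSupport (μ : Measure ℝ) : Set ℝ :=
  {t : ℝ | ∀ U : Set ℝ, IsOpen U → t ∈ U → 0 < μ U}

/-!
Pick `θ₀ ∈ supp μ ∩ [0, 2/3)`. Along the deterministic orbit of `V_{θ₀}` the point stays in `G₁`,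
where the third coordinate obeys `x₃ ↦ V(x)₃ ≥ x₃ (1 + (2 - 3θ₀)(1/3 - x₃))`; so `x₃` climbs to
`1/3`, which in `G₁` forces the point close to `C`. As `φ_N(x)` depends continuously on
`(θ₁, …, θ_N)`, a product neighbourhood of `(θ₀, …, θ₀)` still lands near `C`, and this
neighbourhood has positive probability by independence and because `θ₀ ∈ supp μ`.
-/

lemma exists_sub_lt_of_logistic_lower_bound {a : ℕ → ℝ} {b κ δ : ℝ} (hκ : 0 < κ) (hδ : 0 < δ)
    (ha₀ : 0 < a 0) (hle : ∀ n, a n ≤ b) (hgrow : ∀ n, a n * (1 + κ * (b - a n)) ≤ a (n + 1)) :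
    ∃ n, b - a n < δ := by
  by_contra! hfar
  have hq : 1 < 1 + κ * δ := lt_add_of_pos_right 1 (mul_pos hκ hδ)
  have hgeom : ∀ n, a 0 * (1 + κ * δ) ^ n ≤ a n := by
    intro n
    induction n with
    | zero => simp
    | succ n ih =>
      have han : 0 ≤ a n := (mul_nonneg ha₀.le (pow_nonneg (by linarith) n)).trans ih
      calc a 0 * (1 + κ * δ) ^ (n + 1) = a 0 * (1 + κ * δ) ^ n * (1 + κ * δ) := by
            rw [pow_succ, mul_assoc]
        _ ≤ a n * (1 + κ * δ) := by gcongr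
        _ ≤ a n * (1 + κ * (b - a n)) := by gcongr; exact hfar n
        _ ≤ a (n + 1) := hgrow n
  obtain ⟨n, hn⟩ := pow_unbounded_of_one_lt (b / a 0) hq
  rw [div_lt_iff₀ ha₀] at hn
  linarith [hgeom n, hle n, mul_comm ((1 + κ * δ) ^ n) (a 0)]

lemma ProbabilityTheory.iIndepFun.measure_preimage_pos_of_isOpen {ι Ω : Type*}
    [MeasurableSpace Ω] {P : Measure Ω} {μ : Measure ℝ} {Θ : ι → Ω → ℝ}
    (hmeas : ∀ i, Measurable (Θ i)) (hindep : iIndepFun Θ P)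
    (hlaw : ∀ i, P.map (Θ i) = μ) {U : Set (ι → ℝ)} (hU : IsOpen U) {t : ι → ℝ} (htU : t ∈ U)
    (ht : ∀ i, t i ∈ measSupport μ) :
    0 < P {ω | (fun i => Θ i ω) ∈ U} := by
  obtain ⟨I, u, hu, hIu⟩ := isOpen_pi_iff.mp hU t htU
  have hcyl : (⋂ i ∈ I, Θ i ⁻¹' u i) ⊆ {ω | (fun i => Θ i ω) ∈ U} :=
    fun ω hω => hIu fun i hi => Set.mem_iInter₂.mp hω i hi
  refine lt_of_lt_of_le ?_ (measure_mono hcyl)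
  rw [hindep.measure_inter_preimage_eq_mul I fun i hi => (hu i hi).1.measurableSet,
    CanonicallyOrderedAdd.prod_pos]
  intro i hi
  rw [← Measure.map_apply (hmeas i) (hu i hi).1.measurableSet, hlaw i]
  exact ht i (u i) (hu i hi).1 (hu i hi).2

def vcsoFactor (θ a b c : ℝ) : ℝ :=
  a ^ 2 + 3 * θ * a * (b + c) + 3 * (1 - θ) * (b ^ 2 + c ^ 2) + 2 * b * c

section Vcso

variable {θ : ℝ} {x : EuclideanSpace ℝ (Fin 3)}

@[simp] lemma Vcso_apply_zero : Vcso θ x 0 = x 0 * vcsoFactor θ (x 0) (x 1) (x 2) := by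
  simp [Vcso, vcsoFactor]

@[simp] lemma Vcso_apply_one : Vcso θ x 1 = x 1 * vcsoFactor θ (x 1) (x 2) (x 0) := by
  simp [Vcso, vcsoFactor]

@[simp] lemma Vcso_apply_two : Vcso θ x 2 = x 2 * vcsoFactor θ (x 2) (x 0) (x 1) := by
  simp [Vcso, vcsoFactor]

lemma Vcso_sum : Vcso θ x 0 + Vcso θ x 1 + Vcso θ x 2 = (x 0 + x 1 + x 2) ^ 3 := by
  simp only [Vcso_apply_zero, Vcso_apply_one, Vcso_apply_two, vcsoFactor]
  ring

lemma vcsoFactor_nonneg {a b c : ℝ} (hθ : θ ∈ Set.Icc 0 1) (ha : 0 ≤ a) (hb : 0 ≤ b)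
    (hc : 0 ≤ c) : 0 ≤ vcsoFactor θ a b c := by
  obtain ⟨h0, h1⟩ := hθ
  unfold vcsoFactor
  have : 0 ≤ 1 - θ := by linarith
  positivity

lemma mul_vcsoFactor_le {a b c : ℝ} (hθ : θ ∈ Set.Icc 0 1) (hb : 0 ≤ b) (hc : 0 ≤ c)
    (hba : b ≤ a) : b * vcsoFactor θ b c a ≤ a * vcsoFactor θ a b c := by
  obtain ⟨h0, h1⟩ := hθ
  have ha : 0 ≤ a := hb.trans hba
  have hQ : 0 ≤ (a - b) ^ 2 + 6 * θ * a * b + 3 * θ * c * (a + b) + 3 * (1 - θ) * c ^ 2 := by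
    have : 0 ≤ 1 - θ := by linarith
    positivity
  have hdiff : a * vcsoFactor θ a b c - b * vcsoFactor θ b c a
      = (a - b) * ((a - b) ^ 2 + 6 * θ * a * b + 3 * θ * c * (a + b) + 3 * (1 - θ) * c ^ 2) := by
    unfold vcsoFactor; ring
  nlinarith [mul_nonneg (sub_nonneg.mpr hba) hQ]

lemma one_add_mul_le_vcsoFactor {a b c : ℝ} (hθ : θ ≤ 2 / 3) (hsum : a + b + c = 1) :
    1 + (2 - 3 * θ) * (1 / 3 - c) ≤ vcsoFactor θ c a b := by
  obtain rfl : a = 1 - b - c := by linarith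
  unfold vcsoFactor
  nlinarith [mul_nonneg (by linarith : (0:ℝ) ≤ 2 - 3 * θ) (sq_nonneg (1 - 2 * b - c)),
    mul_nonneg (by linarith : (0:ℝ) ≤ 2 - 3 * θ) (sq_nonneg (1 / 3 - c))]

lemma Vcso_mem_G1 (hθ : θ ∈ Set.Icc 0 1) (hx : x ∈ G1) : Vcso θ x ∈ G1 := by
  obtain ⟨⟨h0, h1, h2, hsum⟩, h10, h21⟩ := hx
  refine ⟨⟨?_, ?_, ?_, ?_⟩, ?_, ?_⟩
  · simpa using mul_nonneg h0 (vcsoFactor_nonneg hθ h0 h1 h2)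
  · simpa using mul_nonneg h1 (vcsoFactor_nonneg hθ h1 h2 h0)
  · simpa using mul_nonneg h2 (vcsoFactor_nonneg hθ h2 h0 h1)
  · rw [Vcso_sum, hsum, one_pow]
  · simpa using mul_vcsoFactor_le hθ h1 h2 h10
  · simpa using mul_vcsoFactor_le hθ h2 h0 h21

lemma Vcso_apply_two_ge (hθ : θ ≤ 2 / 3) (hx : x ∈ simplex2) :
    x 2 * (1 + (2 - 3 * θ) * (1 / 3 - x 2)) ≤ Vcso θ x 2 := by
  rw [Vcso_apply_two]
  exact mul_le_mul_of_nonneg_left (one_add_mul_le_vcsoFactor hθ hx.2.2.2) hx.2.2.1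

lemma continuous_Vcso : Continuous fun p : ℝ × EuclideanSpace ℝ (Fin 3) => Vcso p.1 p.2 := by
  unfold Vcso
  fun_prop

end Vcso

lemma intG1_subset_G1 : intG1 ⊆ G1 :=
  fun _ ⟨hy, h10, h21, _⟩ => ⟨hy, h10.le, h21.le⟩

lemma apply_two_le_of_mem_G1 {y : EuclideanSpace ℝ (Fin 3)} (hy : y ∈ G1) : y 2 ≤ 1 / 3 := by
  obtain ⟨⟨-, -, -, hsum⟩, h10, h21⟩ := hy
  linarith

/-- In `G₁` the coordinates lie within `2 (1/3 - y₃)` of `1/3`. -/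
lemma dist_Cpt_le_of_mem_G1 {y : EuclideanSpace ℝ (Fin 3)} (hy : y ∈ G1) :
    dist y Cpt ≤ 3 * (1 / 3 - y 2) := by
  obtain ⟨⟨-, -, -, hsum⟩, h10, h21⟩ := hy
  rw [EuclideanSpace.dist_eq, Real.sqrt_le_left (by linarith), Fin.sum_univ_three]
  simp only [Cpt, Real.dist_eq, sq_abs, Matrix.cons_val_zero, Matrix.cons_val_one,
    Matrix.cons_val_two, Matrix.head_cons, Matrix.tail_cons]
  nlinarith [mul_nonneg (by linarith : 0 ≤ y 0 - 1 / 3) (by linarith : 0 ≤ 1 - y 0 - 2 * y 2),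
    mul_nonneg (by linarith : 0 ≤ y 1 - y 2) (by linarith : 0 ≤ y 0 - y 1)]

lemma phiRDS_mem_G1 {θs : ℕ → ℝ} (hθs : ∀ n, θs n ∈ Set.Icc 0 1)
    {x : EuclideanSpace ℝ (Fin 3)} (hx : x ∈ G1) (n : ℕ) : phiRDS θs n x ∈ G1 := by
  induction n with
  | zero => exact hx
  | succ n ih => exact Vcso_mem_G1 (hθs n) ih

lemma continuous_phiRDS (N : ℕ) (x : EuclideanSpace ℝ (Fin 3)) :
    Continuous fun θs : ℕ → ℝ => phiRDS θs N x := by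
  induction N with
  | zero => exact continuous_const
  | succ n ih => exact continuous_Vcso.comp ((continuous_apply n).prodMk ih)

lemma exists_dist_phiRDS_const_Cpt_lt {θ : ℝ} (hθ : θ ∈ Set.Ico 0 (2 / 3))
    {x : EuclideanSpace ℝ (Fin 3)} (hx : x ∈ intG1) {ε : ℝ} (hε : 0 < ε) :
    ∃ N, dist (phiRDS (fun _ => θ) N x) Cpt < ε := by
  have hG : ∀ n, phiRDS (fun _ => θ) n x ∈ G1 :=
    phiRDS_mem_G1 (fun _ => ⟨hθ.1, by linarith [hθ.2]⟩) (intG1_subset_G1 hx)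
  obtain ⟨N, hN⟩ :=
    exists_sub_lt_of_logistic_lower_bound (a := fun n => phiRDS (fun _ => θ) n x 2)
    (by linarith [hθ.2] : 0 < 2 - 3 * θ) (by positivity : 0 < ε / 3) hx.2.2.2
    (fun n => apply_two_le_of_mem_G1 (hG n)) (fun n => Vcso_apply_two_ge hθ.2.le (hG n).1)
  exact ⟨N, (dist_Cpt_le_of_mem_G1 (hG N)).trans_lt (by linarith)⟩

theorem reach_C_with_positive_probability_general (μ : Measure ℝ)
    (hsupp : (measSupport μ ∩ Set.Ico 0 (2/3)).Nonempty)
    {Ω : Type*} [MeasurableSpace Ω] (P : Measure Ω)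
    (Θ : ℕ → Ω → ℝ) (hmeas : ∀ n, Measurable (Θ n))
    (hindep : iIndepFun Θ P)
    (hlaw : ∀ n, Measure.map (Θ n) P = μ) :
    ∀ ε > (0:ℝ), ∀ x ∈ intG1, ∃ N : ℕ,
      0 < P {ω | dist (phiRDS (fun k => Θ k ω) N x) Cpt < ε} := by
  intro ε hε x hx
  obtain ⟨θ₀, hθ₀supp, hθ₀⟩ := hsupp
  obtain ⟨N, hN⟩ := exists_dist_phiRDS_const_Cpt_lt hθ₀ hx hε
  exact ⟨N, hindep.measure_preimage_pos_of_isOpen hmeas hlaw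
    ((continuous_phiRDS N x).isOpen_preimage _ Metric.isOpen_ball) hN fun _ => hθ₀supp⟩

/-- Lemma 2.3, first part. -/
theorem reach_C_with_positive_probability (μ : Measure ℝ) [IsProbabilityMeasure μ] (hμ1 : μ (Set.Icc 0 1) = 1)
    (hsupp : (measSupport μ ∩ Set.Ico 0 (2/3)).Nonempty)
    {Ω : Type*} [MeasurableSpace Ω] (P : Measure Ω) [IsProbabilityMeasure P]
    (Θ : ℕ → Ω → ℝ) (hmeas : ∀ n, Measurable (Θ n))
    (hindep : iIndepFun Θ P)
    (hlaw : ∀ n, Measure.map (Θ n) P = μ) :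
    ∀ ε > (0:ℝ), ∀ x ∈ intG1, ∃ N : ℕ,
      0 < P {ω | dist (phiRDS (fun k => Θ k ω) N x) Cpt < ε} :=
  reach_C_with_positive_probability_general μ hsupp P Θ hmeas hindep hlaw
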